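/- arXiv:1402.3748 — 2 statements merged into one kernel-verified Lean document; each statement's English description precedes it below -/
import Mathlib

section
/- The least trimmed squares estimator is the least squares estimator on the best subsample: Fix n, y ∈ ℝⁿ, and an n×p matrix X such that X_{[𝒜]} has full column rank for every 𝒜 ⊆ {1,…,n} with |𝒜| = m. Let β̂_LTS be any minimizer over β ∈ ℝ^p of Σ_{i=1}^m r²_{π_i(β)}(β) (the sum of the m smallest squared residuals), and let 𝒜*_n be a minimizer of ψ_n(𝒜) over 𝒜 ⊆ {1,…,n} with |𝒜| = m. Then β̂_LTS = β̂_{[J(β̂_LTS)]}, the trimmed objective value of β̂_LTS equals ψ_n(𝒜*_n), i.e., Σ_{i=1}^m r²_{π_i(β̂_LTS)}(β̂_LTS) = ψ_n(𝒜*_n) = min_β Σ_{i=1}^m r²_{π_i(β)}(β), and J(β̂_LTS) attains this minimum of ψ_n; in particular β̂_{[𝒜*_n]} is also a least trimmed squares estimator. -/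
open Filter Topology

/-- The trimmed sum of squares: the sum of the `m` smallest squared residuals of `β`,
realized as the minimum of `∑_{i ∈ 𝒜} r_i(β)²` over subsets `𝒜` of size `m`. -/
noncomputable def trimmedSS {n p : ℕ} (x : Fin n → Fin p → ℝ) (y : Fin n → ℝ) (m : ℕ)
    (β : Fin p → ℝ) : ℝ :=
  sInf ((fun 𝒜 : Finset (Fin n) => ∑ i ∈ 𝒜, (y i - ∑ j, x i j * β j) ^ 2) ''
    {𝒜 | 𝒜.card = m})

/-!
Let `J` index the `m` smallest squared residuals of `β̂_LTS`. The chain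
`trimmedSS β̂_LTS = RSS_J(β̂_LTS) ≥ ψ(J) ≥ ψ(𝒜*) ≥ trimmedSS β̂_[𝒜*] ≥ trimmedSS β̂_LTS`
closes into equalities. So `β̂_LTS` also minimizes `RSS_J`, and full column rank makes that
minimizer unique: by the parallelogram identity, two minimizers differ by a vector in the kernel
of `X_[J]`.
-/

namespace Finset

variable {ι M : Type*} [AddCommMonoid M] [LinearOrder M] [IsOrderedCancelAddMonoid M]

lemma sum_le_sum_of_card_eq_of_forall_le {s t : Finset ι} {f : ι → M} (hst : #s = #t)
    (hf : ∀ i ∈ s, ∀ k ∈ t, f i ≤ f k) : ∑ i ∈ s, f i ≤ ∑ k ∈ t, f k := by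
  rcases t.eq_empty_or_nonempty with rfl | ht
  · simp [card_eq_zero.mp hst]
  obtain ⟨k₀, hk₀, hk₀_min⟩ := t.exists_min_image f ht
  calc ∑ i ∈ s, f i ≤ #s • f k₀ := sum_le_card_nsmul _ _ _ fun i hi ↦ hf i hi k₀ hk₀
    _ = #t • f k₀ := by rw [hst]
    _ ≤ ∑ k ∈ t, f k := card_nsmul_le_sum _ _ _ hk₀_min

lemma isLeast_sum_of_forall_le_of_notMem [DecidableEq ι] {J : Finset ι} {f : ι → M}
    (hJ : ∀ i ∈ J, ∀ k ∉ J, f i ≤ f k) :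
    IsLeast ((fun 𝒜 ↦ ∑ i ∈ 𝒜, f i) '' {𝒜 | #𝒜 = #J}) (∑ i ∈ J, f i) := by
  refine ⟨⟨J, rfl, rfl⟩, ?_⟩
  rintro _ ⟨𝒜, h𝒜, rfl⟩
  refine sum_sdiff_le_sum_sdiff.mp <| sum_le_sum_of_card_eq_of_forall_le ?_ fun i hi k hk ↦ ?_
  · exact card_sdiff_comm h𝒜.symm
  · exact hJ i (mem_sdiff.mp hi).1 k (mem_sdiff.mp hk).2

end Finset

section LeastSquares

variable {ι κ : Type*} [Fintype κ] (x : ι → κ → ℝ) (y : ι → ℝ)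

/-- The paper's `ψ(𝒜)` is `rss x y 𝒜 β̂_[𝒜]`. -/
def rss (s : Finset ι) (b : κ → ℝ) : ℝ := ∑ i ∈ s, (y i - ∑ j, x i j * b j) ^ 2

variable {x y}

lemma rss_nonneg (s : Finset ι) (b : κ → ℝ) : 0 ≤ rss x y s b :=
  Finset.sum_nonneg fun _ _ ↦ sq_nonneg _

lemma rss_add_rss (s : Finset ι) (β b : κ → ℝ) :
    rss x y s β + rss x y s b =
      2 * rss x y s (fun j ↦ (β j + b j) / 2) + (∑ i ∈ s, (∑ j, x i j * (b j - β j)) ^ 2) / 2 := by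
  simp only [rss, Finset.mul_sum, Finset.sum_div, ← Finset.sum_add_distrib]
  refine Finset.sum_congr rfl fun i _ ↦ ?_
  have hmid : ∑ j, x i j * ((β j + b j) / 2) = ((∑ j, x i j * β j) + ∑ j, x i j * b j) / 2 := by
    rw [← Finset.sum_add_distrib, Finset.sum_div]
    exact Finset.sum_congr rfl fun j _ ↦ by ring
  have hdiff : ∑ j, x i j * (b j - β j) = (∑ j, x i j * b j) - ∑ j, x i j * β j := by
    rw [← Finset.sum_sub_distrib]
    exact Finset.sum_congr rfl fun j _ ↦ by ring
  rw [hmid, hdiff]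
  ring

lemma eq_of_rss_le_of_forall_rss_le {s : Finset ι}
    (hrank : ∀ b : κ → ℝ, (∀ i ∈ s, ∑ j, x i j * b j = 0) → b = 0) {β b : κ → ℝ}
    (hβ : ∀ c, rss x y s β ≤ rss x y s c) (hb : rss x y s b ≤ rss x y s β) : b = β := by
  have hfit : ∑ i ∈ s, (∑ j, x i j * (b j - β j)) ^ 2 ≤ 0 := by
    linarith [rss_add_rss (x := x) (y := y) s β b, hβ fun j ↦ (β j + b j) / 2]
  have hsq : ∀ i ∈ s, (∑ j, x i j * (b j - β j)) ^ 2 = 0 :=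
    (Finset.sum_eq_zero_iff_of_nonneg fun _ _ ↦ sq_nonneg _).mp
      (hfit.antisymm (Finset.sum_nonneg fun _ _ ↦ sq_nonneg _))
  exact sub_eq_zero.mp (hrank _ fun i hi ↦ pow_eq_zero_iff two_ne_zero |>.mp (hsq i hi))

end LeastSquares

section Trimmed

variable {n p : ℕ} {x : Fin n → Fin p → ℝ} {y : Fin n → ℝ} {m : ℕ}

lemma trimmedSS_le_rss {𝒜 : Finset (Fin n)} (h𝒜 : 𝒜.card = m) (b : Fin p → ℝ) :
    trimmedSS x y m b ≤ rss x y 𝒜 b :=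
  csInf_le ⟨0, by rintro _ ⟨_, -, rfl⟩; exact rss_nonneg _ b⟩ ⟨𝒜, h𝒜, rfl⟩

lemma trimmedSS_eq_rss_of_forall_le_of_notMem {J : Finset (Fin n)} (hJ : J.card = m)
    {b : Fin p → ℝ}
    (h : ∀ i ∈ J, ∀ k ∉ J, (y i - ∑ j, x i j * b j) ^ 2 ≤ (y k - ∑ j, x k j * b j) ^ 2) :
    trimmedSS x y m b = rss x y J b := by
  subst hJ
  exact (Finset.isLeast_sum_of_forall_le_of_notMem h).csInf_eq

end Trimmed

theorem lts_is_best_subsample_ls_general {n p m : ℕ}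
    (x : Fin n → Fin p → ℝ) (y : Fin n → ℝ)
    (hrank : ∀ 𝒜 : Finset (Fin n), 𝒜.card = m →
      ∀ b : Fin p → ℝ, (∀ i ∈ 𝒜, ∑ j, x i j * b j = 0) → b = 0)
    (betaHat : Finset (Fin n) → (Fin p → ℝ))
    (hbetaHat : ∀ 𝒜 : Finset (Fin n), 𝒜.card = m → ∀ b : Fin p → ℝ,
      ∑ i ∈ 𝒜, (y i - ∑ j, x i j * betaHat 𝒜 j) ^ 2 ≤
        ∑ i ∈ 𝒜, (y i - ∑ j, x i j * b j) ^ 2)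
    (βLTS : Fin p → ℝ)
    (hLTS : ∀ b : Fin p → ℝ, trimmedSS x y m βLTS ≤ trimmedSS x y m b)
    (Astar : Finset (Fin n)) (hAcard : Astar.card = m)
    (hAmin : ∀ 𝒜 : Finset (Fin n), 𝒜.card = m →
      ∑ i ∈ Astar, (y i - ∑ j, x i j * betaHat Astar j) ^ 2 ≤
        ∑ i ∈ 𝒜, (y i - ∑ j, x i j * betaHat 𝒜 j) ^ 2)
    (J : Finset (Fin n)) (hJcard : J.card = m)
    (hJ : ∀ i ∈ J, ∀ k ∉ J,
      (y i - ∑ j, x i j * βLTS j) ^ 2 ≤ (y k - ∑ j, x k j * βLTS j) ^ 2) :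
    βLTS = betaHat J ∧
    trimmedSS x y m βLTS = ∑ i ∈ Astar, (y i - ∑ j, x i j * betaHat Astar j) ^ 2 ∧
    ∑ i ∈ J, (y i - ∑ j, x i j * betaHat J j) ^ 2 =
      ∑ i ∈ Astar, (y i - ∑ j, x i j * betaHat Astar j) ^ 2 ∧
    ∀ b : Fin p → ℝ, trimmedSS x y m (betaHat Astar) ≤ trimmedSS x y m b := by
  have hLTS_J : trimmedSS x y m βLTS = rss x y J βLTS :=
    trimmedSS_eq_rss_of_forall_le_of_notMem hJcard hJ
  have hJ_fit : rss x y J (betaHat J) ≤ rss x y J βLTS := hbetaHat J hJcard βLTS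
  have hAstar_J : rss x y Astar (betaHat Astar) ≤ rss x y J (betaHat J) := hAmin J hJcard
  have hAstar_trim : trimmedSS x y m (betaHat Astar) ≤ rss x y Astar (betaHat Astar) :=
    trimmedSS_le_rss hAcard _
  have hLTS_Astar := hLTS (betaHat Astar)
  refine ⟨eq_of_rss_le_of_forall_rss_le (hrank J hJcard) (hbetaHat J hJcard) (by linarith),
    (by linarith : trimmedSS x y m βLTS = rss x y Astar (betaHat Astar)),
    (by linarith : rss x y J (betaHat J) = rss x y Astar (betaHat Astar)), fun b ↦ ?_⟩
  exact (by linarith : trimmedSS x y m (betaHat Astar) ≤ trimmedSS x y m βLTS).trans (hLTS b)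

/-- The least trimmed squares estimator is the least squares estimator on the best
subsample: if every `m`-row submatrix of `X` has full column rank, `β̂` assigns to each
`m`-subset `𝒜` the least squares estimator on `𝒜`, `βLTS` minimizes the trimmed sum of
squares, `𝒜*` minimizes `ψ(𝒜) = ∑_{i∈𝒜} (y_i - x_i'β̂_[𝒜])²` over `m`-subsets, and `J`
is an index set of `m` smallest squared residuals of `βLTS`, then `βLTS = β̂_[J]`, the
trimmed objective value of `βLTS` equals `ψ(𝒜*)`, `J` also attains the minimum of `ψ`,
and `β̂_[𝒜*]` is again a least trimmed squares estimator. -/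
theorem lts_is_best_subsample_ls {n p m : ℕ} (hm : m ≤ n)
    (x : Fin n → Fin p → ℝ) (y : Fin n → ℝ)
    (hrank : ∀ 𝒜 : Finset (Fin n), 𝒜.card = m →
      ∀ b : Fin p → ℝ, (∀ i ∈ 𝒜, ∑ j, x i j * b j = 0) → b = 0)
    (betaHat : Finset (Fin n) → (Fin p → ℝ))
    (hbetaHat : ∀ 𝒜 : Finset (Fin n), 𝒜.card = m → ∀ b : Fin p → ℝ,
      ∑ i ∈ 𝒜, (y i - ∑ j, x i j * betaHat 𝒜 j) ^ 2 ≤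
        ∑ i ∈ 𝒜, (y i - ∑ j, x i j * b j) ^ 2)
    (βLTS : Fin p → ℝ)
    (hLTS : ∀ b : Fin p → ℝ, trimmedSS x y m βLTS ≤ trimmedSS x y m b)
    (Astar : Finset (Fin n)) (hAcard : Astar.card = m)
    (hAmin : ∀ 𝒜 : Finset (Fin n), 𝒜.card = m →
      ∑ i ∈ Astar, (y i - ∑ j, x i j * betaHat Astar j) ^ 2 ≤
        ∑ i ∈ 𝒜, (y i - ∑ j, x i j * betaHat 𝒜 j) ^ 2)
    (J : Finset (Fin n)) (hJcard : J.card = m)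
    (hJ : ∀ i ∈ J, ∀ k ∉ J,
      (y i - ∑ j, x i j * βLTS j) ^ 2 ≤ (y k - ∑ j, x k j * βLTS j) ^ 2) :
    βLTS = betaHat J ∧
    trimmedSS x y m βLTS = ∑ i ∈ Astar, (y i - ∑ j, x i j * betaHat Astar j) ^ 2 ∧
    ∑ i ∈ J, (y i - ∑ j, x i j * betaHat J j) ^ 2 =
      ∑ i ∈ Astar, (y i - ∑ j, x i j * betaHat Astar j) ^ 2 ∧
    ∀ b : Fin p → ℝ, trimmedSS x y m (betaHat Astar) ≤ trimmedSS x y m b :=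
  lts_is_best_subsample_ls_general x y hrank betaHat hbetaHat βLTS hLTS Astar hAcard hAmin J hJcard
    hJ
end

section
/- Almost sure concentration of chi-square sequences: Let ξ₁, ξ₂, … be random variables on a common probability space such that each ξ_n has the chi-square distribution with r_n degrees of freedom, where r_n is a positive integer (no independence assumed). Let {b_n} be a sequence of positive numbers such that r_n/b_n → α for some α ∈ [0,1] and Σ_{n=1}^∞ exp(−ϵ b_n) < ∞ for every ϵ > 0. Then (ξ_n − r_n)/b_n → 0 almost surely as n → ∞. -/
/-!
The chi-square law with `r` degrees of freedom is `Gamma(r/2, 1/2)`, with moment generating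
function `(1 - u)^(-r/2)` at `u/2`. Chernoff's bound with `u` of order `ε`, combined with
`-log (1 - u) ≤ u + 2u²` and `u - u²/2 ≤ log (1 + u)`, gives `P(|ξ - r| ≥ ε b) ≤ 2 exp (-c b)`
with `c > 0` depending only on `ε`, as soon as `r ≤ 2b`; this holds eventually because
`r_n / b_n → α ≤ 1`. These bounds are summable by hypothesis, so Borel–Cantelli applies. Only
the marginal laws enter, which is why no independence is needed.
-/

open MeasureTheory ProbabilityTheory Filter Topology Real Set
open scoped ENNReal

lemma measure_le_exp_neg_mul_lintegral_exp {μ : Measure ℝ} (t c : ℝ) :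
    μ {x | c ≤ t * x} ≤ ENNReal.ofReal (exp (-c)) * ∫⁻ x, ENNReal.ofReal (exp (t * x)) ∂μ := by
  have hmarkov := mul_meas_ge_le_lintegral₀ (μ := μ)
    (f := fun x => ENNReal.ofReal (exp (t * x - c))) (by fun_prop) 1
  have hsub : {x | c ≤ t * x} ⊆ {x | 1 ≤ ENNReal.ofReal (exp (t * x - c))} := fun x hx =>
    ENNReal.one_le_ofReal.2 (one_le_exp (sub_nonneg.2 hx))
  have hsplit : ∀ x, ENNReal.ofReal (exp (t * x - c))
      = ENNReal.ofReal (exp (-c)) * ENNReal.ofReal (exp (t * x)) := fun x => by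
    rw [← ENNReal.ofReal_mul (exp_nonneg _), ← exp_add, sub_eq_neg_add]
  calc μ {x | c ≤ t * x} ≤ μ {x | 1 ≤ ENNReal.ofReal (exp (t * x - c))} := measure_mono hsub
    _ ≤ ∫⁻ x, ENNReal.ofReal (exp (t * x - c)) ∂μ := by simpa using hmarkov
    _ = _ := by simp_rw [hsplit]; exact lintegral_const_mul' _ _ ENNReal.ofReal_ne_top

@[fun_prop]
lemma measurable_gammaPDF (a R : ℝ) : Measurable (gammaPDF a R) :=
  (measurable_gammaPDFReal a R).ennreal_ofReal

lemma gammaPDF_mul_exp {a R t : ℝ} (hR : 0 < R) (ht : t < R) (x : ℝ) :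
    gammaPDF a R x * ENNReal.ofReal (exp (t * x))
      = ENNReal.ofReal ((R / (R - t)) ^ a) * gammaPDF a (R - t) x := by
  rcases lt_or_ge x 0 with hx | hx
  · simp [gammaPDF_of_neg hx]
  have hRt : 0 < R - t := sub_pos.2 ht
  rw [gammaPDF_of_nonneg hx, gammaPDF_of_nonneg hx, ← ENNReal.ofReal_mul' (exp_nonneg _),
    ← ENNReal.ofReal_mul (by positivity), div_rpow hR.le hRt.le]
  congr 1
  have hexp : exp (-(R * x)) * exp (t * x) = exp (-((R - t) * x)) := by
    rw [← exp_add]; ring_nf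
  have : (R - t) ^ a ≠ 0 := (rpow_pos_of_pos hRt a).ne'
  rw [← hexp]
  field_simp

lemma lintegral_exp_mul_gammaMeasure {a R t : ℝ} (ha : 0 < a) (hR : 0 < R) (ht : t < R) :
    ∫⁻ x, ENNReal.ofReal (exp (t * x)) ∂gammaMeasure a R = ENNReal.ofReal ((R / (R - t)) ^ a) := by
  rw [gammaMeasure, lintegral_withDensity_eq_lintegral_mul _ (by fun_prop) (by fun_prop)]
  simp_rw [Pi.mul_apply, gammaPDF_mul_exp hR ht]
  rw [lintegral_const_mul _ (by fun_prop), lintegral_gammaPDF_eq_one ha (sub_pos.2 ht), mul_one]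

noncomputable abbrev chiSqMeasure (r : ℝ) : Measure ℝ := gammaMeasure (r / 2) (1 / 2)

lemma lintegral_exp_mul_chiSqMeasure {r u : ℝ} (hr : 0 < r) (hu : u < 1) :
    ∫⁻ x, ENNReal.ofReal (exp (u / 2 * x)) ∂chiSqMeasure r
      = ENNReal.ofReal (exp (-(r / 2 * log (1 - u)))) := by
  have hpos : 0 < 1 - u := sub_pos.2 hu
  have hratio : (1 / 2 : ℝ) / (1 / 2 - u / 2) = (1 - u)⁻¹ := by
    field_simp
  rw [lintegral_exp_mul_gammaMeasure (by positivity) one_half_pos (by linarith), hratio,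
    rpow_def_of_pos (inv_pos.2 hpos), log_inv]
  ring_nf

lemma chiSqMeasure_Ici_le {r u : ℝ} (hr : 0 < r) (hu0 : 0 ≤ u) (hu1 : u < 1) (c : ℝ) :
    chiSqMeasure r (Ici c) ≤ ENNReal.ofReal (exp (-(u / 2 * c) - r / 2 * log (1 - u))) := by
  calc chiSqMeasure r (Ici c) ≤ chiSqMeasure r {x | u / 2 * c ≤ u / 2 * x} :=
        measure_mono fun x hx => mul_le_mul_of_nonneg_left (mem_Ici.1 hx) (by positivity)
    _ ≤ _ := measure_le_exp_neg_mul_lintegral_exp _ _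
    _ = _ := by
      rw [lintegral_exp_mul_chiSqMeasure hr hu1, ← ENNReal.ofReal_mul (exp_nonneg _), ← exp_add]
      ring_nf

lemma chiSqMeasure_Iic_le {r u : ℝ} (hr : 0 < r) (hu : 0 ≤ u) (c : ℝ) :
    chiSqMeasure r (Iic c) ≤ ENNReal.ofReal (exp (u / 2 * c - r / 2 * log (1 + u))) := by
  calc chiSqMeasure r (Iic c) ≤ chiSqMeasure r {x | -u / 2 * c ≤ -u / 2 * x} :=
        measure_mono fun x hx => mul_le_mul_of_nonpos_left (mem_Iic.1 hx) (by linarith)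
    _ ≤ _ := measure_le_exp_neg_mul_lintegral_exp _ _
    _ = _ := by
      rw [lintegral_exp_mul_chiSqMeasure hr (by linarith), ← ENNReal.ofReal_mul (exp_nonneg _),
        ← exp_add, sub_neg_eq_add]
      ring_nf

lemma neg_log_one_sub_le {u : ℝ} (hu : u ≤ 1 / 2) :
    -log (1 - u) ≤ u + 2 * u ^ 2 := by
  have hpos : 0 < 1 - u := by linarith
  have hinv : (1 - u)⁻¹ ≤ 1 + u + 2 * u ^ 2 := by
    rw [inv_le_iff_one_le_mul₀ hpos]
    nlinarith
  linarith [one_sub_inv_le_log_of_pos hpos]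

lemma sub_sq_div_two_le_log_one_add {u : ℝ} (hu : 0 ≤ u) : u - u ^ 2 / 2 ≤ log (1 + u) := by
  refine le_trans ?_ (le_log_one_add_of_nonneg hu)
  rw [le_div_iff₀ (by linarith)]
  nlinarith [pow_nonneg hu 3]

lemma chiSqMeasure_Ici_add_mul_le {r b ε u : ℝ} (hr : 0 < r) (hrb : r ≤ 2 * b) (hu0 : 0 ≤ u)
    (hu : u ≤ 1 / 2) (huε : 8 * u ≤ ε) :
    chiSqMeasure r (Ici (r + ε * b)) ≤ ENNReal.ofReal (exp (-(u * ε / 4) * b)) := by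
  refine (chiSqMeasure_Ici_le hr hu0 (by linarith) _).trans
    (ENNReal.ofReal_le_ofReal (exp_le_exp.2 ?_))
  have hlog := mul_le_mul_of_nonneg_left (neg_log_one_sub_le hu) (by positivity : 0 ≤ r / 2)
  nlinarith [mul_nonneg (sq_nonneg u) (sub_nonneg.2 hrb),
    mul_nonneg (mul_nonneg hu0 (by linarith : 0 ≤ b)) (sub_nonneg.2 huε)]

lemma chiSqMeasure_Iic_sub_mul_le {r b ε u : ℝ} (hr : 0 < r) (hrb : r ≤ 2 * b) (hu0 : 0 ≤ u)
    (huε : 2 * u ≤ ε) :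
    chiSqMeasure r (Iic (r - ε * b)) ≤ ENNReal.ofReal (exp (-(u * ε / 4) * b)) := by
  refine (chiSqMeasure_Iic_le hr hu0 _).trans (ENNReal.ofReal_le_ofReal (exp_le_exp.2 ?_))
  have hlog := mul_le_mul_of_nonneg_left (sub_sq_div_two_le_log_one_add hu0)
    (by positivity : 0 ≤ r / 2)
  nlinarith [mul_nonneg (sq_nonneg u) (sub_nonneg.2 hrb),
    mul_nonneg (mul_nonneg hu0 (by linarith : 0 ≤ b)) (sub_nonneg.2 huε)]

lemma chiSqMeasure_abs_sub_div_ge_le {ε : ℝ} (hε : 0 < ε) :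
    ∃ c > 0, ∀ {r b : ℝ}, 0 < r → r ≤ 2 * b →
      chiSqMeasure r {x | ε ≤ |(x - r) / b|} ≤ ENNReal.ofReal (2 * exp (-c * b)) := by
  set u := min (ε / 8) (1 / 2)
  have hu0 : 0 < u := lt_min (by positivity) one_half_pos
  have huε : 8 * u ≤ ε := by linarith [min_le_left (ε / 8) (1 / 2)]
  refine ⟨u * ε / 4, by positivity, fun {r b} hr hrb => ?_⟩
  have hb : 0 < b := by linarith
  have hsplit : {x | ε ≤ |(x - r) / b|} ⊆ Ici (r + ε * b) ∪ Iic (r - ε * b) := by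
    intro x hx
    rcases le_abs'.1 (show ε ≤ |(x - r) / b| from hx) with h | h
    · right
      rw [div_le_iff₀ hb] at h
      exact mem_Iic.2 (by linarith)
    · left
      rw [le_div_iff₀ hb] at h
      exact mem_Ici.2 (by linarith)
  calc chiSqMeasure r {x | ε ≤ |(x - r) / b|}
      ≤ chiSqMeasure r (Ici (r + ε * b)) + chiSqMeasure r (Iic (r - ε * b)) :=
        (measure_mono hsplit).trans (measure_union_le _ _)
    _ ≤ ENNReal.ofReal (exp (-(u * ε / 4) * b)) + ENNReal.ofReal (exp (-(u * ε / 4) * b)) :=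
        add_le_add (chiSqMeasure_Ici_add_mul_le hr hrb hu0.le (min_le_right _ _) huε)
          (chiSqMeasure_Iic_sub_mul_le hr hrb hu0.le (by linarith))
    _ = ENNReal.ofReal (2 * exp (-(u * ε / 4) * b)) := by
        rw [← ENNReal.ofReal_add (exp_nonneg _) (exp_nonneg _), two_mul]

lemma ENNReal.tsum_ne_top_of_eventually_le_ofReal {g : ℕ → ℝ≥0∞} {f : ℕ → ℝ} (hf : Summable f)
    (hg : ∀ n, g n ≠ ∞) (h : ∀ᶠ n in atTop, g n ≤ ENNReal.ofReal (f n)) : ∑' n, g n ≠ ∞ := by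
  have hsum : Summable fun n => (g n).toReal := by
    refine hf.abs.of_norm_bounded_eventually_nat (h.mono fun n hn => ?_)
    rw [norm_of_nonneg ENNReal.toReal_nonneg]
    exact ENNReal.toReal_le_of_le_ofReal (abs_nonneg _)
      (hn.trans (ENNReal.ofReal_le_ofReal (le_abs_self _)))
  have hofReal : ∑' n, g n = ENNReal.ofReal (∑' n, (g n).toReal) := by
    rw [ENNReal.ofReal_tsum_of_nonneg (fun _ => ENNReal.toReal_nonneg) hsum]
    simp_rw [ENNReal.ofReal_toReal (hg _)]
  exact hofReal ▸ ENNReal.ofReal_ne_top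

lemma ae_tendsto_zero_of_tsum_measure_le_abs_ne_top {Ω : Type*} [MeasurableSpace Ω]
    {μ : Measure Ω} {Y : ℕ → Ω → ℝ} (h : ∀ ε > 0, ∑' n, μ {ω | ε ≤ |Y n ω|} ≠ ∞) :
    ∀ᵐ ω ∂μ, Tendsto (fun n => Y n ω) atTop (𝓝 0) := by
  have hsmall : ∀ k : ℕ, ∀ᵐ ω ∂μ, ∀ᶠ n in atTop, |Y n ω| < 1 / (k + 1) := fun k =>
    (ae_eventually_notMem (h _ Nat.one_div_pos_of_nat)).mono fun _ hω =>
      hω.mono fun _ hn => not_le.1 hn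
  filter_upwards [ae_all_iff.2 hsmall] with ω hω
  refine NormedAddGroup.tendsto_nhds_zero.2 fun ε hε => ?_
  obtain ⟨k, hk⟩ := exists_nat_one_div_lt hε
  exact (hω k).mono fun _ hn => hn.trans hk

theorem chiSq_sub_dof_div_tendsto_zero_ae_general
    {Ω : Type*} [MeasurableSpace Ω] (P : Measure Ω) [IsProbabilityMeasure P]
    (ξ : ℕ → Ω → ℝ) (r : ℕ → ℕ) (hr : ∀ n, 0 < r n)
    (hξ : ∀ n, Measure.map (ξ n) P = gammaMeasure ((r n : ℝ) / 2) (1 / 2))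
    (b : ℕ → ℝ) (hbpos : ∀ n, 0 < b n) (α : ℝ) (hα1 : α ≤ 1)
    (hrb : Tendsto (fun n => (r n : ℝ) / b n) atTop (𝓝 α))
    (hsum : ∀ ε > 0, Summable fun n => Real.exp (-ε * b n)) :
    ∀ᵐ ω ∂P, Tendsto (fun n => (ξ n ω - r n) / b n) atTop (𝓝 0) := by
  have hr' (n : ℕ) : (0 : ℝ) < r n := Nat.cast_pos.2 (hr n)
  have hlaw (n : ℕ) : P.map (ξ n) = chiSqMeasure (r n) := hξ n
  have hdof : ∀ᶠ n in atTop, (r n : ℝ) ≤ 2 * b n :=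
    (hrb.eventually_lt_const (by linarith)).mono fun n hn =>
      ((div_lt_iff₀ (hbpos n)).1 hn).le
  refine ae_tendsto_zero_of_tsum_measure_le_abs_ne_top fun ε hε => ?_
  obtain ⟨c, hc, htail⟩ := chiSqMeasure_abs_sub_div_ge_le hε
  refine ENNReal.tsum_ne_top_of_eventually_le_ofReal ((hsum c hc).mul_left 2)
    (fun _ => measure_ne_top _ _) (hdof.mono fun n hn => ?_)
  have := isProbabilityMeasure_gammaMeasure (half_pos (hr' n)) one_half_pos
  have hξn : AEMeasurable (ξ n) P :=
    .of_map_ne_zero (by rw [hlaw n]; exact IsProbabilityMeasure.ne_zero _)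
  calc P {ω | ε ≤ |(ξ n ω - r n) / b n|} = chiSqMeasure (r n) {x | ε ≤ |(x - r n) / b n|} := by
        rw [← hlaw n, Measure.map_apply_of_aemeasurable hξn
          (measurableSet_le (by fun_prop) (by fun_prop))]
        rfl
    _ ≤ _ := htail (hr' n) hn

/-- Almost sure concentration of chi-square sequences: if `ξ n` has the chi-square
distribution with `r n` degrees of freedom (chi-square with `r` degrees of freedom is
the Gamma distribution with shape `r/2` and rate `1/2`), `r n / b n → α ∈ [0,1]`, and
`∑ exp (-ε * b n) < ∞` for every `ε > 0`, then `(ξ n - r n) / b n → 0` almost surely. -/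
theorem chiSq_sub_dof_div_tendsto_zero_ae
    {Ω : Type*} [MeasurableSpace Ω] (P : Measure Ω) [IsProbabilityMeasure P]
    (ξ : ℕ → Ω → ℝ) (r : ℕ → ℕ) (hr : ∀ n, 0 < r n)
    (hξ : ∀ n, Measure.map (ξ n) P = gammaMeasure ((r n : ℝ) / 2) (1 / 2))
    (b : ℕ → ℝ) (hbpos : ∀ n, 0 < b n) (α : ℝ) (hα0 : 0 ≤ α) (hα1 : α ≤ 1)
    (hrb : Tendsto (fun n => (r n : ℝ) / b n) atTop (𝓝 α))
    (hsum : ∀ ε > 0, Summable fun n => Real.exp (-ε * b n)) :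
    ∀ᵐ ω ∂P, Tendsto (fun n => (ξ n ω - r n) / b n) atTop (𝓝 0) :=
  chiSq_sub_dof_div_tendsto_zero_ae_general P ξ r hr hξ b hbpos α hα1 hrb hsum
end
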